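/- For shared-input composition, the min-entropy leakage satisfies I_∞(π, C₁ ∥ C₂) ≤ I_∞(π, C₁) + I_∞(π, C₂) + H^min(π) − H_∞(π), where H^min(π) = −log min{π[x] : π[x] ≠ 0}. In particular, for the uniform prior (where H^min = H_∞) this yields min-capacity subadditivity: C_∞(C₁ ∥ C₂) ≤ C_∞(C₁) + C_∞(C₂). -/
import Mathlib


open Finset

namespace QIF14

/-- Prior vulnerability. -/
noncomputable def Vmax {X : Type*} [Fintype X] [Nonempty X] (π : X → ℝ) : ℝ :=
  Finset.univ.sup' Finset.univ_nonempty π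

/-- Posterior vulnerability. -/
noncomputable def Vpost {X Y : Type*} [Fintype X] [Fintype Y] [Nonempty X]
    (π : X → ℝ) (C : X → Y → ℝ) : ℝ :=
  ∑ y, Finset.univ.sup' Finset.univ_nonempty fun x => π x * C x y

/-- Min-entropy leakage (in bits). -/
noncomputable def Iinf {X Y : Type*} [Fintype X] [Fintype Y] [Nonempty X]
    (π : X → ℝ) (C : X → Y → ℝ) : ℝ :=
  Real.logb 2 (Vpost π C / Vmax π)

/-- The type of probability distributions on `X`. -/
def Dist (X : Type*) [Fintype X] : Type _ :=
  { π : X → ℝ // (∀ x, 0 ≤ π x) ∧ ∑ x, π x = 1 }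

/-- Min-capacity `C_∞(C) = sup_π I_∞(π, C)`. -/
noncomputable def minCap {X Y : Type*} [Fintype X] [Fintype Y] [Nonempty X]
    (C : X → Y → ℝ) : ℝ :=
  ⨆ π : Dist X, Iinf π.1 C

/-- Parallel composition with shared input. -/
noncomputable def shParC {X Y₁ Y₂ : Type*}
    (C₁ : X → Y₁ → ℝ) (C₂ : X → Y₂ → ℝ) : X → Y₁ × Y₂ → ℝ :=
  fun x q => C₁ x q.1 * C₂ x q.2

/-! ### Auxiliary lemmas -/

section Aux

variable {X : Type*} [Fintype X] [Nonempty X]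

lemma le_supU (f : X → ℝ) (x : X) :
    f x ≤ Finset.univ.sup' Finset.univ_nonempty f :=
  Finset.le_sup' f (Finset.mem_univ x)

lemma supU_nonneg (f : X → ℝ) (hf : ∀ x, 0 ≤ f x) :
    0 ≤ Finset.univ.sup' Finset.univ_nonempty f :=
  le_trans (hf (Classical.arbitrary X)) (le_supU f _)

lemma supU_le {f : X → ℝ} {c : ℝ} (h : ∀ x, f x ≤ c) :
    Finset.univ.sup' Finset.univ_nonempty f ≤ c :=
  Finset.sup'_le _ _ fun x _ => h x

lemma supU_mul_left (c : ℝ) (hc : 0 ≤ c) (f : X → ℝ) :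
    Finset.univ.sup' Finset.univ_nonempty (fun x => c * f x)
      = c * Finset.univ.sup' Finset.univ_nonempty f := by
  apply le_antisymm
  · exact supU_le fun x => mul_le_mul_of_nonneg_left (le_supU f x) hc
  · obtain ⟨x, -, hxe⟩ := Finset.exists_mem_eq_sup' Finset.univ_nonempty f
    rw [hxe]
    exact le_supU (fun x => c * f x) x

variable {Y : Type*} [Fintype Y]

lemma Vmax_pos {π : X → ℝ} (hπ0 : ∀ x, 0 ≤ π x) (hπ1 : ∑ x, π x = 1) :
    0 < Vmax π := by
  by_contra h
  push_neg at h
  have : ∀ x, π x = 0 := fun x =>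
    le_antisymm (le_trans (le_supU π x) h) (hπ0 x)
  simp [this] at hπ1

lemma Vmax_le_Vpost {π : X → ℝ} (hπ0 : ∀ x, 0 ≤ π x)
    {C : X → Y → ℝ} (hC0 : ∀ x y, 0 ≤ C x y) (hC1 : ∀ x, ∑ y, C x y = 1) :
    Vmax π ≤ Vpost π C := by
  obtain ⟨x₀, -, hx₀⟩ := Finset.exists_mem_eq_sup' (Finset.univ_nonempty (α := X)) π
  rw [Vmax, hx₀]
  calc π x₀ = ∑ y, π x₀ * C x₀ y := by rw [← Finset.mul_sum, hC1 x₀, mul_one]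
    _ ≤ Vpost π C :=
      Finset.sum_le_sum fun y _ => le_supU (fun x => π x * C x y) x₀

lemma Vpost_pos {π : X → ℝ} (hπ0 : ∀ x, 0 ≤ π x) (hπ1 : ∑ x, π x = 1)
    {C : X → Y → ℝ} (hC0 : ∀ x y, 0 ≤ C x y) (hC1 : ∀ x, ∑ y, C x y = 1) :
    0 < Vpost π C :=
  lt_of_lt_of_le (Vmax_pos hπ0 hπ1) (Vmax_le_Vpost hπ0 hC0 hC1)

/-- The uniform-prior bound: `Vpost π C ≤ Vmax π * Σ_y max_x C x y`. -/
lemma Vpost_le_Vmax_mul {π : X → ℝ} (hπ0 : ∀ x, 0 ≤ π x)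
    {C : X → Y → ℝ} (hC0 : ∀ x y, 0 ≤ C x y) :
    Vpost π C ≤ Vmax π * ∑ y, Finset.univ.sup' Finset.univ_nonempty (fun x => C x y) := by
  rw [Finset.mul_sum]
  refine Finset.sum_le_sum fun y _ => supU_le fun x => ?_
  exact mul_le_mul (le_supU π x) (le_supU (fun x => C x y) x) (hC0 x y)
    (supU_nonneg π hπ0)

lemma Iinf_le_logb {π : X → ℝ} (hπ0 : ∀ x, 0 ≤ π x) (hπ1 : ∑ x, π x = 1)
    {C : X → Y → ℝ} (hC0 : ∀ x y, 0 ≤ C x y) (hC1 : ∀ x, ∑ y, C x y = 1) :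
    Iinf π C ≤ Real.logb 2
      (∑ y, Finset.univ.sup' Finset.univ_nonempty (fun x => C x y)) := by
  have hVm := Vmax_pos hπ0 hπ1
  have hVp := Vpost_pos hπ0 hπ1 hC0 hC1
  have hdiv : 0 < Vpost π C / Vmax π := div_pos hVp hVm
  have hle : Vpost π C / Vmax π
      ≤ ∑ y, Finset.univ.sup' Finset.univ_nonempty (fun x => C x y) := by
    rw [div_le_iff₀ hVm, mul_comm]
    exact Vpost_le_Vmax_mul hπ0 hC0
  exact (Real.logb_le_logb one_lt_two hdiv (lt_of_lt_of_le hdiv hle)).2 hle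

/-- `Σ_y max_x C x y ≥ 1` for a channel. -/
lemma one_le_M {C : X → Y → ℝ} (hC1 : ∀ x, ∑ y, C x y = 1) :
    1 ≤ ∑ y, Finset.univ.sup' Finset.univ_nonempty (fun x => C x y) := by
  set x₀ := Classical.arbitrary X
  calc (1 : ℝ) = ∑ y, C x₀ y := (hC1 x₀).symm
    _ ≤ _ := Finset.sum_le_sum fun y _ => le_supU (fun x => C x y) x₀

/-- The uniform distribution. -/
noncomputable def unif (X : Type*) [Fintype X] [Nonempty X] : Dist X :=
  ⟨fun _ => ((Fintype.card X : ℝ))⁻¹,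
    fun _ => by positivity,
    by
      have : (0:ℝ) < Fintype.card X := by
        exact_mod_cast Fintype.card_pos
      simp [Finset.sum_const, Finset.card_univ, mul_inv_cancel₀ (ne_of_gt this)]⟩

instance distNonempty : Nonempty (Dist X) := ⟨unif X⟩

lemma Iinf_unif {C : X → Y → ℝ} :
    Iinf (unif X).1 C = Real.logb 2
      (∑ y, Finset.univ.sup' Finset.univ_nonempty (fun x => C x y)) := by
  have hn : (0:ℝ) < Fintype.card X := by exact_mod_cast Fintype.card_pos
  have hVm : Vmax (unif X).1 = ((Fintype.card X : ℝ))⁻¹ := by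
    simp [Vmax, unif, Finset.sup'_const]
  have hVp : Vpost (unif X).1 C = ((Fintype.card X : ℝ))⁻¹
      * ∑ y, Finset.univ.sup' Finset.univ_nonempty (fun x => C x y) := by
    rw [Vpost, Finset.mul_sum]
    refine Finset.sum_congr rfl fun y _ => ?_
    exact supU_mul_left _ (inv_nonneg.mpr hn.le) (fun x => C x y)
  have hne : ((Fintype.card X : ℝ))⁻¹ ≠ 0 := inv_ne_zero (ne_of_gt hn)
  rw [Iinf, hVm, hVp, mul_comm, mul_div_assoc, div_self hne, mul_one]

lemma logb_M_le_minCap {C : X → Y → ℝ} (hC0 : ∀ x y, 0 ≤ C x y)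
    (hC1 : ∀ x, ∑ y, C x y = 1) :
    Real.logb 2 (∑ y, Finset.univ.sup' Finset.univ_nonempty (fun x => C x y))
      ≤ minCap C := by
  have hb : BddAbove (Set.range fun π : Dist X => Iinf π.1 C) := by
    refine ⟨Real.logb 2 (∑ y, Finset.univ.sup' Finset.univ_nonempty (fun x => C x y)), ?_⟩
    rintro r ⟨π, rfl⟩
    exact Iinf_le_logb π.2.1 π.2.2 hC0 hC1
  have := le_ciSup hb (unif X)
  rwa [Iinf_unif] at this

end Aux

/-- `I_∞(π, C₁ ∥ C₂) ≤ I_∞(π,C₁) + I_∞(π,C₂) + H^min(π) − H_∞(π)` where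
`H^min(π) = −log min{π[x] : π[x] ≠ 0}`; in particular min-capacity is subadditive:
`C_∞(C₁ ∥ C₂) ≤ C_∞(C₁) + C_∞(C₂)`. -/
theorem shared_min_entropy_leakage_upper {X Y₁ Y₂ : Type*}
    [Fintype X] [Fintype Y₁] [Fintype Y₂] [Nonempty X]
    (π : X → ℝ) (C₁ : X → Y₁ → ℝ) (C₂ : X → Y₂ → ℝ)
    (hπ0 : ∀ x, 0 ≤ π x) (hπ1 : ∑ x, π x = 1)
    (hC₁0 : ∀ x y, 0 ≤ C₁ x y) (hC₁1 : ∀ x, ∑ y, C₁ x y = 1)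
    (hC₂0 : ∀ x y, 0 ≤ C₂ x y) (hC₂1 : ∀ x, ∑ y, C₂ x y = 1)
    (hS : (Finset.univ.filter (fun x : X => π x ≠ 0)).Nonempty) :
    Iinf π (shParC C₁ C₂)
        ≤ Iinf π C₁ + Iinf π C₂
          + (- Real.logb 2
              ((Finset.univ.filter (fun x : X => π x ≠ 0)).inf' hS π))
          - (- Real.logb 2 (Vmax π))
      ∧ minCap (shParC C₁ C₂) ≤ minCap C₁ + minCap C₂ := by
  -- properties of the composed channel
  have hC0 : ∀ x (y : Y₁ × Y₂), 0 ≤ shParC C₁ C₂ x y := fun x y =>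
    mul_nonneg (hC₁0 x y.1) (hC₂0 x y.2)
  have hC1 : ∀ x, ∑ y : Y₁ × Y₂, shParC C₁ C₂ x y = 1 := by
    intro x
    rw [Fintype.sum_prod_type]
    simp only [shParC]
    rw [← Finset.sum_mul_sum, hC₁1 x, hC₂1 x, one_mul]
  set pmin := (Finset.univ.filter (fun x : X => π x ≠ 0)).inf' hS π with hpmin_def
  have hpmin_pos : 0 < pmin := by
    obtain ⟨x, hx, hxe⟩ := Finset.exists_mem_eq_inf' hS π
    rw [hpmin_def, hxe]
    rcases (hπ0 x).lt_or_eq with h | h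
    · exact h
    · exact absurd h.symm (Finset.mem_filter.mp hx).2
  have hpmin_le : ∀ x, π x ≠ 0 → pmin ≤ π x := fun x hx =>
    Finset.inf'_le π (Finset.mem_filter.mpr ⟨Finset.mem_univ x, hx⟩)
  have hVm := Vmax_pos hπ0 hπ1
  have hV1 := Vpost_pos hπ0 hπ1 hC₁0 hC₁1
  have hV2 := Vpost_pos hπ0 hπ1 hC₂0 hC₂1
  have hV12 := Vpost_pos hπ0 hπ1 hC0 hC1
  -- key inequality : pmin * V₁₂ ≤ V₁ * V₂
  have key : pmin * Vpost π (shParC C₁ C₂) ≤ Vpost π C₁ * Vpost π C₂ := by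
    rw [Vpost, Finset.mul_sum, Vpost, Vpost, Finset.sum_mul_sum,
      Fintype.sum_prod_type]
    refine Finset.sum_le_sum fun y₁ _ => Finset.sum_le_sum fun y₂ _ => ?_
    rw [← supU_mul_left pmin hpmin_pos.le]
    set S₁ := Finset.univ.sup' Finset.univ_nonempty (fun x => π x * C₁ x y₁) with hS₁def
    set S₂ := Finset.univ.sup' Finset.univ_nonempty (fun x => π x * C₂ x y₂) with hS₂def
    have hS₁nn : 0 ≤ S₁ := supU_nonneg _ fun x => mul_nonneg (hπ0 x) (hC₁0 x y₁)
    have hS₂nn : 0 ≤ S₂ := supU_nonneg _ fun x => mul_nonneg (hπ0 x) (hC₂0 x y₂)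
    refine supU_le fun x => ?_
    have hS₁x : π x * C₁ x y₁ ≤ S₁ := le_supU (fun x => π x * C₁ x y₁) x
    have hS₂x : π x * C₂ x y₂ ≤ S₂ := le_supU (fun x => π x * C₂ x y₂) x
    by_cases hx : π x = 0
    · simp only [shParC, hx, zero_mul, mul_zero]
      exact mul_nonneg hS₁nn hS₂nn
    · have hple := hpmin_le x hx
      calc pmin * (π x * shParC C₁ C₂ x (y₁, y₂))
          ≤ π x * (π x * shParC C₁ C₂ x (y₁, y₂)) := by
            refine mul_le_mul_of_nonneg_right hple ?_
            exact mul_nonneg (hπ0 x) (hC0 x (y₁, y₂))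
        _ = (π x * C₁ x y₁) * (π x * C₂ x y₂) := by simp [shParC]; ring
        _ ≤ S₁ * S₂ := mul_le_mul hS₁x hS₂x
            (mul_nonneg (hπ0 x) (hC₂0 x y₂)) hS₁nn
  -- part 1
  have key2 : Real.logb 2 (Vpost π (shParC C₁ C₂)) + Real.logb 2 pmin
      ≤ Real.logb 2 (Vpost π C₁) + Real.logb 2 (Vpost π C₂) := by
    rw [← Real.logb_mul (ne_of_gt hV12) (ne_of_gt hpmin_pos),
      ← Real.logb_mul (ne_of_gt hV1) (ne_of_gt hV2)]
    refine (Real.logb_le_logb one_lt_two (by positivity) (by positivity)).2 ?_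
    nlinarith [key]
  constructor
  · rw [Iinf, Iinf, Iinf, Real.logb_div (ne_of_gt hV12) (ne_of_gt hVm),
      Real.logb_div (ne_of_gt hV1) (ne_of_gt hVm),
      Real.logb_div (ne_of_gt hV2) (ne_of_gt hVm)]
    linarith [key2]
  -- part 2
  · set M₁ := ∑ y, Finset.univ.sup' Finset.univ_nonempty (fun x => C₁ x y) with hM₁
    set M₂ := ∑ y, Finset.univ.sup' Finset.univ_nonempty (fun x => C₂ x y) with hM₂
    set M₁₂ := ∑ y : Y₁ × Y₂,
      Finset.univ.sup' Finset.univ_nonempty (fun x => shParC C₁ C₂ x y) with hM₁₂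
    have hM₁pos : (0:ℝ) < M₁ := lt_of_lt_of_le one_pos (one_le_M hC₁1)
    have hM₂pos : (0:ℝ) < M₂ := lt_of_lt_of_le one_pos (one_le_M hC₂1)
    have hM₁₂pos : (0:ℝ) < M₁₂ := lt_of_lt_of_le one_pos (one_le_M hC1)
    have hMle : M₁₂ ≤ M₁ * M₂ := by
      rw [hM₁₂, hM₁, hM₂, Finset.sum_mul_sum, Fintype.sum_prod_type]
      refine Finset.sum_le_sum fun y₁ _ => Finset.sum_le_sum fun y₂ _ => ?_
      refine supU_le fun x => ?_
      exact mul_le_mul (le_supU (fun x => C₁ x y₁) x) (le_supU (fun x => C₂ x y₂) x)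
        (hC₂0 x y₂) (supU_nonneg _ fun x => hC₁0 x y₁)
    calc minCap (shParC C₁ C₂) ≤ Real.logb 2 M₁₂ :=
          ciSup_le fun ρ => Iinf_le_logb ρ.2.1 ρ.2.2 hC0 hC1
      _ ≤ Real.logb 2 (M₁ * M₂) :=
          (Real.logb_le_logb one_lt_two hM₁₂pos (by positivity)).2 hMle
      _ = Real.logb 2 M₁ + Real.logb 2 M₂ :=
          Real.logb_mul (ne_of_gt hM₁pos) (ne_of_gt hM₂pos)
      _ ≤ minCap C₁ + minCap C₂ :=
          add_le_add (logb_M_le_minCap hC₁0 hC₁1) (logb_M_le_minCap hC₂0 hC₂1)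

end QIF14
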